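/- arXiv:2509.12070 — 4 statements merged into one kernel-verified Lean document; each statement's English description precedes it below -/
import Mathlib

section
/- For α ∈ (0,1)∪(1,2] and θ ∈ [0,1), the delayed Sibuya distribution DSib(θ, α) has APGF ψ(t) = 1 − (1−ζ)t − ζ t^α for t ∈ [0,2], where ζ = (1−θ)/(1−α). -/
/-!
Put `v = t - 1`, so that `(1 - t) ^ y = (-1) ^ y * v ^ y` and the sum over `y ≥ 2` becomes
`-ζ` times the tail of the binomial series `∑ C(α, n) v ^ n = (1 + v) ^ α = t ^ α`. Mathlib gives
the binomial series on `|v| < 1`; for `α > 0` the coefficients are absolutely summable, so the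
identity extends by continuity to `v = ±1`, i.e. to `t = 0` and `t = 2`. The two dropped terms
`1 + α v` together with `θ (1 - t)` give the linear part because `ζ (1 - α) = 1 - θ`.
-/

/-- The generalized binomial coefficient `C(α, y) = α(α-1)⋯(α-y+1)/y!`. -/
noncomputable def genChoose (α : ℝ) (y : ℕ) : ℝ :=
  (∏ i ∈ Finset.range y, (α - i)) / (Nat.factorial y)

open Set

theorem genChoose_eq_ringChoose (α : ℝ) (n : ℕ) : genChoose α n = Ring.choose α n := by
  rw [Ring.choose_eq_smul, genChoose, ← Polynomial.aeval_eq_smeval, Polynomial.aeval_def,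
    Polynomial.eval₂_eq_eval_map, descPochhammer_map, descPochhammer_eval_eq_prod_range,
    smul_eq_mul, div_eq_inv_mul]

theorem genChoose_succ_mul (α : ℝ) (n : ℕ) :
    genChoose α (n + 1) * (n + 1) = (α - n) * genChoose α n := by
  have : (n.factorial : ℝ) ≠ 0 := mod_cast n.factorial_ne_zero
  rw [genChoose, genChoose, Finset.prod_range_succ, Nat.factorial_succ]
  push_cast
  field_simp

theorem abs_genChoose_succ_mul {α : ℝ} {n : ℕ} (hn : α ≤ n) :
    |genChoose α (n + 1)| * (n + 1) = (n - α) * |genChoose α n| := by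
  have := congrArg abs (genChoose_succ_mul α n)
  rwa [abs_mul, abs_mul, abs_of_nonneg (by positivity : (0 : ℝ) ≤ n + 1), abs_sub_comm,
    abs_of_nonneg (sub_nonneg.2 hn)] at this

/-- Beyond `N = ⌈α⌉₊` the recurrence makes `α |C(α, n)|` telescope against `n |C(α, n)| ≥ 0`. -/
theorem summable_abs_genChoose {α : ℝ} (hα : 0 < α) : Summable fun n ↦ |genChoose α n| := by
  set N := ⌈α⌉₊
  set b : ℕ → ℝ := fun k ↦ (N + k : ℝ) * |genChoose α (N + k)|
  have step (k : ℕ) : α * |genChoose α (N + k)| = b k - b (k + 1) := by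
    have := abs_genChoose_succ_mul (α := α) (n := N + k)
      ((Nat.le_ceil α).trans (by exact_mod_cast N.le_add_right k))
    push_cast at this
    simp only [b, Nat.cast_add, Nat.cast_one, ← add_assoc]
    linarith
  rw [← summable_nat_add_iff N]
  refine summable_of_sum_range_le (c := b 0 / α) (fun _ ↦ abs_nonneg _) fun K ↦ ?_
  have hbK : 0 ≤ b K := by positivity
  rw [le_div_iff₀ hα, Finset.sum_mul]
  simp_rw [add_comm _ N, mul_comm _ α, step, Finset.sum_range_sub']
  linarith

theorem hasSum_genChoose_mul_pow_of_abs_lt (α : ℝ) {v : ℝ} (hv : |v| < 1) :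
    HasSum (fun n ↦ genChoose α n * v ^ n) ((1 + v) ^ α) := by
  have := Real.one_add_rpow_hasFPowerSeriesOnBall_zero (a := α) |>.hasSum
    (y := v) (by simpa [← ofReal_norm, Real.norm_eq_abs] using hv)
  simpa [genChoose_eq_ringChoose, binomialSeries, FormalMultilinearSeries.ofScalars] using this

theorem norm_genChoose_mul_pow_le (α : ℝ) (n : ℕ) {v : ℝ} (hv : v ∈ Icc (-1) 1) :
    ‖genChoose α n * v ^ n‖ ≤ |genChoose α n| := by
  rw [Real.norm_eq_abs, abs_mul, abs_pow]
  exact mul_le_of_le_one_right (abs_nonneg _) (pow_le_one₀ (abs_nonneg v) (abs_le.2 hv))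

theorem hasSum_genChoose_mul_pow {α : ℝ} (hα : 0 < α) {v : ℝ} (hv : v ∈ Icc (-1) 1) :
    HasSum (fun n ↦ genChoose α n * v ^ n) ((1 + v) ^ α) := by
  have hsum := summable_abs_genChoose hα
  suffices EqOn (fun v ↦ ∑' n, genChoose α n * v ^ n) (fun v ↦ (1 + v) ^ α) (Icc (-1) 1) by
    rw [← show ∑' n, genChoose α n * v ^ n = (1 + v) ^ α from this hv]
    exact (hsum.of_norm_bounded (norm_genChoose_mul_pow_le α · hv)).hasSum
  refine EqOn.of_subset_closure (s := Ioo (-1) 1) ?_ ?_ ?_ Ioo_subset_Icc_self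
    (by rw [closure_Ioo (by norm_num)])
  · exact fun w hw ↦ (hasSum_genChoose_mul_pow_of_abs_lt α (abs_lt.2 hw)).tsum_eq
  · exact continuousOn_tsum (fun n ↦ by fun_prop) hsum
      fun n w hw ↦ norm_genChoose_mul_pow_le α n hw
  · exact fun w _ ↦ ((continuous_const.add continuous_id).rpow_const
      fun _ ↦ Or.inr hα.le).continuousWithinAt

theorem delayedSibuya_apgf_general (α θ : ℝ)
    (hα : α ∈ Set.Ioo (0 : ℝ) 1 ∪ Set.Ioc (1 : ℝ) 2)
    (t : ℝ) (ht : t ∈ Set.Icc (0 : ℝ) 2) :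
    θ * (1 - t) +
      ∑' y : ℕ, ((-1 : ℝ) ^ ((y + 2) + 1) * ((1 - θ) / (1 - α)) * genChoose α (y + 2))
        * (1 - t) ^ (y + 2)
      = 1 - (1 - (1 - θ) / (1 - α)) * t - ((1 - θ) / (1 - α)) * t ^ α := by
  obtain ⟨hα0, hα1⟩ : 0 < α ∧ 1 - α ≠ 0 := by
    rcases hα with h | h
    · exact ⟨h.1, by linarith [h.2]⟩
    · exact ⟨by linarith [h.1], by linarith [h.1]⟩
  set ζ := (1 - θ) / (1 - α)
  have htail :
      HasSum (fun y ↦ genChoose α (y + 2) * (t - 1) ^ (y + 2)) (t ^ α - 1 - α * (t - 1)) := by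
    have := (hasSum_nat_add_iff' 2).2 (hasSum_genChoose_mul_pow hα0 (v := t - 1)
      ⟨by linarith [ht.1], by linarith [ht.2]⟩)
    simpa [Finset.sum_range_succ, genChoose, sub_sub] using this
  have hterm (y : ℕ) : (-1 : ℝ) ^ ((y + 2) + 1) * ζ * genChoose α (y + 2) * (1 - t) ^ (y + 2)
      = -ζ * (genChoose α (y + 2) * (t - 1) ^ (y + 2)) := by
    have hsq : (-1 : ℝ) ^ (y + 2) * (-1) ^ (y + 2) = 1 := by rw [← mul_pow]; norm_num
    rw [show 1 - t = -1 * (t - 1) by ring, mul_pow, pow_succ]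
    linear_combination (-(ζ * genChoose α (y + 2) * (t - 1) ^ (y + 2))) * hsq
  have hζ : ζ * (1 - α) = 1 - θ := div_mul_cancel₀ _ hα1
  rw [tsum_congr hterm, tsum_mul_left, htail.tsum_eq]
  linear_combination (1 - t) * hζ

/-- the delayed Sibuya distribution `DSib(θ, α)` with `α ∈ (0,1)∪(1,2]`,
`θ ∈ [0,1)`, having pmf `p(1) = θ` and `p(y) = (-1)^(y+1)((1-θ)/(1-α))C(α,y)` for
`y ≥ 2`, has APGF `ψ(t) = 1 - (1-ζ)t - ζt^α` where `ζ = (1-θ)/(1-α)`, for `t ∈ [0,2]`. -/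
theorem delayedSibuya_apgf (α θ : ℝ)
    (hα : α ∈ Set.Ioo (0 : ℝ) 1 ∪ Set.Ioc (1 : ℝ) 2) (hθ : θ ∈ Set.Ico (0 : ℝ) 1)
    (t : ℝ) (ht : t ∈ Set.Icc (0 : ℝ) 2) :
    θ * (1 - t) +
      ∑' y : ℕ, ((-1 : ℝ) ^ ((y + 2) + 1) * ((1 - θ) / (1 - α)) * genChoose α (y + 2))
        * (1 - t) ^ (y + 2)
      = 1 - (1 - (1 - θ) / (1 - α)) * t - ((1 - θ) / (1 - α)) * t ^ α :=
  delayedSibuya_apgf_general α θ hα t ht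
end

section
/- For θ ∈ [0,1), the delayed Sibuya distribution DSib(θ, 1), with pmf p(1) = θ and p(y) = (1−θ)/((y−1)y) for y ≥ 2, has APGF ψ(t) = 1 − t + (1−θ) t log t for t ∈ (0,2], with ψ(0) = 1. -/
/-!
Writing `x = 1 - t`, the tail of the APGF is `(1 - θ) ∑ xⁿ⁺²/((n+1)(n+2))`. Since
`1/((n+1)(n+2)) = 1/(n+1) - 1/(n+2)`, this series is `x · (-log (1-x)) - (-log (1-x) - x)
= x + (1-x) log (1-x)` for `|x| < 1`. The series converges uniformly on `[-1, 1]`, and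
`(1-x) log (1-x)` extends continuously to `x = 1` with value `0 = 0 * log 0`, so the identity
persists on the closed interval, i.e. for all `t ∈ [0, 2]`.
-/

open Real Set

lemma summable_one_div_add_one_mul_add_two :
    Summable (fun n : ℕ => (1 : ℝ) / ((n + 1) * (n + 2))) := by
  have hsq : Summable (fun n : ℕ => (1 : ℝ) / ((n + 1 : ℕ) : ℝ) ^ 2) :=
    (summable_nat_add_iff 1).mpr (Real.summable_one_div_nat_pow.mpr one_lt_two)
  refine hsq.of_nonneg_of_le (fun n => by positivity) fun n => ?_
  push_cast
  gcongr
  nlinarith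

lemma norm_pow_add_two_div_add_one_mul_add_two_le {x : ℝ} (hx : x ∈ Icc (-1) 1) (n : ℕ) :
    ‖x ^ (n + 2) / ((n + 1) * (n + 2))‖ ≤ 1 / ((n + 1) * (n + 2)) := by
  rw [norm_div, norm_pow, Real.norm_of_nonneg (by positivity : (0 : ℝ) ≤ (n + 1) * (n + 2))]
  gcongr
  exact pow_le_one₀ (norm_nonneg x) (abs_le.mpr hx)

lemma hasSum_pow_add_two_div_add_one_mul_add_two_of_abs_lt_one {x : ℝ} (hx : |x| < 1) :
    HasSum (fun n : ℕ => x ^ (n + 2) / ((n + 1) * (n + 2))) (x + (1 - x) * log (1 - x)) := by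
  have hlog := Real.hasSum_pow_div_log_of_abs_lt_one hx
  have hshift : HasSum (fun n : ℕ => x ^ (n + 2) / (n + 2)) (-log (1 - x) - x) := by
    simpa [add_assoc, one_add_one_eq_two] using (hasSum_nat_add_iff' 1).mpr hlog
  have hterm : (fun n : ℕ => x ^ (n + 2) / ((n + 1) * (n + 2)))
      = fun n : ℕ => x * (x ^ (n + 1) / (n + 1)) - x ^ (n + 2) / (n + 2) := by
    funext n
    field_simp
    ring
  rw [hterm, show x + (1 - x) * log (1 - x) = x * -log (1 - x) - (-log (1 - x) - x) by ring]
  exact (hlog.mul_left x).sub hshift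

lemma continuousOn_tsum_pow_add_two_div_add_one_mul_add_two :
    ContinuousOn (fun x : ℝ => ∑' n : ℕ, x ^ (n + 2) / ((n + 1) * (n + 2))) (Icc (-1) 1) :=
  continuousOn_tsum (fun _ => (continuous_pow _).continuousOn.div_const _)
    summable_one_div_add_one_mul_add_two
    fun n _ hx => norm_pow_add_two_div_add_one_mul_add_two_le hx n

lemma hasSum_pow_add_two_div_add_one_mul_add_two {x : ℝ} (hx : x ∈ Icc (-1) 1) :
    HasSum (fun n : ℕ => x ^ (n + 2) / ((n + 1) * (n + 2))) (x + (1 - x) * log (1 - x)) := by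
  have hsummable : Summable (fun n : ℕ => x ^ (n + 2) / ((n + 1) * (n + 2))) :=
    summable_one_div_add_one_mul_add_two.of_norm_bounded
      (norm_pow_add_two_div_add_one_mul_add_two_le hx)
  have hcont : ContinuousOn (fun x : ℝ => x + (1 - x) * log (1 - x)) (Icc (-1) 1) :=
    (continuous_id.add
      (Real.continuous_mul_log.comp (continuous_const.sub continuous_id))).continuousOn
  have htsum := Set.EqOn.of_subset_closure (s := Ioo (-1) 1)
    (fun y hy => (hasSum_pow_add_two_div_add_one_mul_add_two_of_abs_lt_one (abs_lt.mpr hy)).tsum_eq)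
    continuousOn_tsum_pow_add_two_div_add_one_mul_add_two hcont Ioo_subset_Icc_self
    (by rw [closure_Ioo (by norm_num)])
  convert hsummable.hasSum using 1
  exact (htsum hx).symm

lemma delayedSibuya_one_apgf_eq (θ : ℝ) {t : ℝ} (ht : t ∈ Icc (0 : ℝ) 2) :
    θ * (1 - t) +
        ∑' y : ℕ, ((1 - θ) / (((y + 2 : ℝ) - 1) * (y + 2 : ℝ))) * (1 - t) ^ (y + 2)
      = 1 - t + (1 - θ) * t * log t := by
  have hx : 1 - t ∈ Icc (-1 : ℝ) 1 := ⟨by linarith [ht.2], by linarith [ht.1]⟩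
  have hterm : ∀ y : ℕ, ((1 - θ) / (((y + 2 : ℝ) - 1) * (y + 2 : ℝ))) * (1 - t) ^ (y + 2)
      = (1 - θ) * ((1 - t) ^ (y + 2) / ((y + 1) * (y + 2))) := fun y => by ring
  rw [tsum_congr hterm, ((hasSum_pow_add_two_div_add_one_mul_add_two hx).mul_left _).tsum_eq,
    sub_sub_cancel]
  ring

theorem delayedSibuya_one_apgf_general (θ : ℝ) :
    (∀ t ∈ Set.Ioc (0 : ℝ) 2,
      θ * (1 - t) +
        ∑' y : ℕ, ((1 - θ) / (((y + 2 : ℝ) - 1) * (y + 2 : ℝ))) * (1 - t) ^ (y + 2)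
        = 1 - t + (1 - θ) * t * Real.log t) ∧
    (θ * (1 - 0) +
        ∑' y : ℕ, ((1 - θ) / (((y + 2 : ℝ) - 1) * (y + 2 : ℝ))) * (1 - 0) ^ (y + 2)
        = 1) :=
  ⟨fun _ ht => delayedSibuya_one_apgf_eq θ (Ioc_subset_Icc_self ht),
    by simpa using delayedSibuya_one_apgf_eq θ (left_mem_Icc.mpr zero_le_two)⟩

/-- the delayed Sibuya distribution `DSib(θ, 1)`, with pmf `p(1) = θ`
and `p(y) = (1-θ)/((y-1)y)` for `y ≥ 2`, has APGF `ψ(t) = 1 - t + (1-θ)t log t`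
for `t ∈ (0,2]`, with `ψ(0) = 1`. -/
theorem delayedSibuya_one_apgf (θ : ℝ) (hθ : θ ∈ Set.Ico (0 : ℝ) 1) :
    (∀ t ∈ Set.Ioc (0 : ℝ) 2,
      θ * (1 - t) +
        ∑' y : ℕ, ((1 - θ) / (((y + 2 : ℝ) - 1) * (y + 2 : ℝ))) * (1 - t) ^ (y + 2)
        = 1 - t + (1 - θ) * t * Real.log t) ∧
    (θ * (1 - 0) +
        ∑' y : ℕ, ((1 - θ) / (((y + 2 : ℝ) - 1) * (y + 2 : ℝ))) * (1 - 0) ^ (y + 2)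
        = 1) :=
  delayedSibuya_one_apgf_general θ
end

section
/- Let X be a non-negative integer-valued random variable that is not Poisson distributed (including not a point mass at 0), with factorial cumulant generating function C(t) = log E[(1−t)^X] continuous on [0,2] with C(0)=0. If a ∈ [0,1] and b ∈ ℝ satisfy C(at) − bt = C(t) for all t ∈ [0,2], then a = 1 and b = 0. -/
open scoped ENNReal NNReal

/-- The factorial cumulant generating function `C(t) = log E[(1-t)^X]`. -/
noncomputable def fcgf (p : PMF ℕ) (t : ℝ) : ℝ :=
  Real.log (∑' n : ℕ, (p n).toReal * (1 - t) ^ n)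

/-!
If `a < 1`, put `μ = b / (1 - a)`. Then `g t = C t + μ t` satisfies `g (a t) = g t`, so
`g t = g (aⁿ t) → g 0 = 0` by continuity at `0`, i.e. `C t = -μ t`. Hence the probability
generating function `E[s^X]` equals `exp (μ (s - 1))` on `(0, 1]`; being at most `1` there forces
`μ ≥ 0`, and the identity theorem for power series then says that `X` is Poisson with rate `μ`.
If `a = 1`, the equation at `t = 1` gives `b = 0`.
-/

open Filter Topology Set Real FormalMultilinearSeries

theorem FormalMultilinearSeries.one_le_radius_ofScalars {𝕜 : Type*}
    [NontriviallyNormedField 𝕜] {c : ℕ → 𝕜} (hc : Summable c) : 1 ≤ (ofScalars 𝕜 c).radius := by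
  simpa using (ofScalars 𝕜 c).le_radius_of_tendsto (r := 1) (l := 0) <| by
    simpa [ofScalars_norm] using hc.tendsto_atTop_zero.norm

theorem eq_of_frequently_tsum_mul_pow_eq {𝕜 : Type*} [NontriviallyNormedField 𝕜]
    [CompleteSpace 𝕜] {c d : ℕ → 𝕜} (hc : 0 < (ofScalars 𝕜 c).radius)
    (hd : 0 < (ofScalars 𝕜 d).radius)
    (h : ∃ᶠ z in 𝓝[≠] 0, ∑' n, c n * z ^ n = ∑' n, d n * z ^ n) : c = d := by
  have hfc := ((ofScalars 𝕜 c).hasFPowerSeriesOnBall hc).hasFPowerSeriesAt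
  have hfd := ((ofScalars 𝕜 d).hasFPowerSeriesOnBall hd).hasFPowerSeriesAt
  have h_eventually := (hfc.analyticAt.frequently_eq_iff_eventually_eq hfd.analyticAt).1 <| by
    simpa [← ofScalarsSum.eq_def, ofScalars_sum_eq] using h
  exact ofScalars_series_injective 𝕜 𝕜
    (hfc.eq_formalMultilinearSeries_of_eventually hfd h_eventually)

theorem apply_eq_apply_zero_of_apply_mul_eq {E : Type*} [TopologicalSpace E] [T2Space E]
    {g : ℝ → E} {T a : ℝ} (hg : ContinuousWithinAt g (Icc 0 T) 0) (ha : a ∈ Ico 0 1)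
    (h : ∀ t ∈ Icc 0 T, g (a * t) = g t) {t : ℝ} (ht : t ∈ Icc 0 T) : g t = g 0 := by
  have h_mem : ∀ n : ℕ, a ^ n * t ∈ Icc 0 T := fun n =>
    ⟨mul_nonneg (pow_nonneg ha.1 n) ht.1,
      (mul_le_of_le_one_left ht.1 (pow_le_one₀ ha.1 ha.2.le)).trans ht.2⟩
  have h_iter : ∀ n : ℕ, g (a ^ n * t) = g t := by
    intro n
    induction n with
    | zero => simp
    | succ n ih => rw [pow_succ', mul_assoc, h _ (h_mem n), ih]
  have h_lim : Tendsto (fun n : ℕ => a ^ n * t) atTop (𝓝[Icc 0 T] 0) :=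
    tendsto_nhdsWithin_iff.2
      ⟨by simpa using (tendsto_pow_atTop_nhds_zero_of_lt_one ha.1 ha.2).mul_const t,
        Eventually.of_forall h_mem⟩
  exact tendsto_nhds_unique (tendsto_const_nhds.congr fun n => (h_iter n).symm)
    (hg.tendsto.comp h_lim)

theorem eq_sub_mul_of_apply_mul_sub_mul_eq {f : ℝ → ℝ} {T a b : ℝ}
    (hf : ContinuousWithinAt f (Icc 0 T) 0) (ha : a ∈ Ico 0 1)
    (h : ∀ t ∈ Icc 0 T, f (a * t) - b * t = f t) {t : ℝ} (ht : t ∈ Icc 0 T) :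
    f t = f 0 - b / (1 - a) * t := by
  have ha1 : 1 - a ≠ 0 := by linarith [ha.2]
  have := apply_eq_apply_zero_of_apply_mul_eq (g := fun t => f t + b / (1 - a) * t)
    (hf.add (continuousWithinAt_id.const_mul _)) ha (fun t ht => by
      rw [← h t ht]; field_simp; ring) ht
  simp only [mul_zero, add_zero] at this
  linarith

namespace PMF

noncomputable def pgf (p : PMF ℕ) (s : ℝ) : ℝ := ∑' n, (p n).toReal * s ^ n

theorem summable_toReal {α : Type*} (p : PMF α) : Summable fun n => (p n).toReal :=
  ENNReal.summable_toReal (p.tsum_coe ▸ ENNReal.one_ne_top)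

theorem tsum_toReal {α : Type*} (p : PMF α) : ∑' n, (p n).toReal = 1 := by
  rw [← ENNReal.tsum_toReal_eq p.apply_ne_top, p.tsum_coe, ENNReal.toReal_one]

theorem summable_toReal_mul_pow (p : PMF ℕ) {s : ℝ} (hs : |s| ≤ 1) :
    Summable fun n => (p n).toReal * s ^ n :=
  p.summable_toReal.of_norm_bounded fun n => by
    simpa [abs_mul, abs_pow] using
      mul_le_of_le_one_right ENNReal.toReal_nonneg (pow_le_one₀ (abs_nonneg s) hs)

theorem pgf_pos (p : PMF ℕ) {s : ℝ} (hs0 : 0 < s) (hs1 : s ≤ 1) : 0 < p.pgf s := by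
  obtain ⟨m, hm⟩ := p.support_nonempty
  exact (summable_toReal_mul_pow p (abs_le.2 ⟨by linarith, hs1⟩)).tsum_pos
    (fun n => by positivity) m (mul_pos (ENNReal.toReal_pos hm (p.apply_ne_top m)) (by positivity))

theorem pgf_le_one (p : PMF ℕ) {s : ℝ} (hs0 : 0 ≤ s) (hs1 : s ≤ 1) : p.pgf s ≤ 1 :=
  p.tsum_toReal ▸ (summable_toReal_mul_pow p (abs_le.2 ⟨by linarith, hs1⟩)).tsum_le_tsum
    (fun n => mul_le_of_le_one_right ENNReal.toReal_nonneg (pow_le_one₀ hs0 hs1))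
    p.summable_toReal

theorem pgf_poissonPMF (r : ℝ≥0) (s : ℝ) :
    (ProbabilityTheory.poissonPMF r).pgf s = exp (r * (s - 1)) := by
  have h_term : ∀ n : ℕ, (ProbabilityTheory.poissonPMF r n).toReal * s ^ n =
      exp (-r) * ((r * s) ^ n / n.factorial) := fun n => by
    rw [← ProbabilityTheory.poissonPMFReal_ofReal_eq_poissonPMF,
      ENNReal.toReal_ofReal ProbabilityTheory.poissonPMFReal_nonneg,
      ProbabilityTheory.poissonPMFReal]
    ring
  rw [pgf, tsum_congr h_term, tsum_mul_left, ← congrFun NormedSpace.exp_eq_tsum_div,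
    ← exp_eq_exp_ℝ, ← exp_add]
  ring_nf

theorem eq_of_eqOn_pgf {p q : PMF ℕ} (h : EqOn p.pgf q.pgf (Ioo 0 1)) : p = q := by
  have h_freq : ∃ᶠ s in 𝓝[≠] (0 : ℝ), p.pgf s = q.pgf s :=
    (eventually_of_mem (Ioo_mem_nhdsGT one_pos) h).frequently.filter_mono (nhdsGT_le_nhdsNE 0)
  have := eq_of_frequently_tsum_mul_pow_eq
    (zero_lt_one.trans_le (one_le_radius_ofScalars p.summable_toReal))
    (zero_lt_one.trans_le (one_le_radius_ofScalars q.summable_toReal)) h_freq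
  ext n
  exact (ENNReal.toReal_eq_toReal_iff' (p.apply_ne_top n) (q.apply_ne_top n)).1 (congrFun this n)

end PMF

theorem fcgf_eq_log_pgf (p : PMF ℕ) (t : ℝ) : fcgf p t = log (p.pgf (1 - t)) := rfl

/-- if `X` is a non-negative integer-valued random variable that is not
Poisson distributed (for any rate, including rate 0, i.e. the point mass at 0), with
factorial cumulant generating function `C` continuous on `[0,2]` with `C(0) = 0`, and
`a ∈ [0,1]`, `b ∈ ℝ` satisfy `C(at) - bt = C(t)` for all `t ∈ [0,2]`, then
`a = 1` and `b = 0`. -/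
theorem equate_thinning_shift (p : PMF ℕ)
    (hnotPoisson : ∀ μ : ℝ≥0, p ≠ ProbabilityTheory.poissonPMF μ)
    (hcont : ContinuousOn (fcgf p) (Set.Icc 0 2)) (h0 : fcgf p 0 = 0)
    (a : ℝ) (ha : a ∈ Set.Icc (0 : ℝ) 1) (b : ℝ)
    (heq : ∀ t ∈ Set.Icc (0 : ℝ) 2, fcgf p (a * t) - b * t = fcgf p t) :
    a = 1 ∧ b = 0 := by
  obtain ⟨ha0, ha1⟩ := ha
  rcases ha1.eq_or_lt with rfl | ha1
  · simpa using heq 1 ⟨zero_le_one, one_le_two⟩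
  exfalso
  set μ := b / (1 - a) with hμ_def
  have h_pgf : ∀ s ∈ Ioc (0 : ℝ) 1, p.pgf s = exp (μ * (s - 1)) := fun s hs => by
    have h_lin := eq_sub_mul_of_apply_mul_sub_mul_eq (hcont 0 ⟨le_rfl, zero_le_two⟩)
      ⟨ha0, ha1⟩ heq (t := 1 - s) ⟨by linarith [hs.2], by linarith [hs.1]⟩
    rw [h0, fcgf_eq_log_pgf, sub_sub_cancel, ← hμ_def] at h_lin
    rw [← exp_log (p.pgf_pos hs.1 hs.2), h_lin]
    ring_nf
  have hμ : 0 ≤ μ := by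
    have := p.pgf_le_one (s := 1 / 2) (by norm_num) (by norm_num)
    rw [h_pgf _ ⟨by norm_num, by norm_num⟩, exp_le_one_iff] at this
    linarith
  refine hnotPoisson (⟨μ, hμ⟩ : ℝ≥0) (PMF.eq_of_eqOn_pgf fun s hs => ?_)
  rw [h_pgf s ⟨hs.1, hs.2.le⟩]
  exact (PMF.pgf_poissonPMF ⟨μ, hμ⟩ s).symm
end

section
/- Suppose (a_n)_{n≥1} is a sequence in (0,1] that is completely multiplicative (a_{nm} = a_n a_m for all n,m) and (weakly) decreasing. Then there exists β ≤ 0 such that a_n = n^β for all n. -/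
/-!
Taking logarithms, `f n = log (a n)` is antitone on the positive integers and satisfies
`f (n ^ k) = k * f n`. Squeezing `n ^ k` between consecutive powers of `m` and applying both `f`
and `log` shows that `f n * log m - f m * log n` is `O(1 / k)` for every `k`, hence zero, so
`f n / log n` does not depend on `n`.
-/

open Real Set

lemma eq_zero_of_forall_nat_mul_abs_le {x C : ℝ} (h : ∀ k : ℕ, k * |x| ≤ C) : x = 0 := by
  by_contra hx
  obtain ⟨k, hk⟩ := exists_nat_gt (C / |x|)
  rw [div_lt_iff₀ (abs_pos.2 hx)] at hk
  linarith [h k]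

lemma map_pow_of_map_mul {a : ℕ → ℝ} (ha1 : a 1 = 1)
    (hmul : ∀ n m, 1 ≤ n → 1 ≤ m → a (n * m) = a n * a m) {n : ℕ} (hn : 1 ≤ n) (k : ℕ) :
    a (n ^ k) = a n ^ k := by
  induction k with
  | zero => simpa using ha1
  | succ k ih => rw [pow_succ, pow_succ, hmul _ n (Nat.one_le_pow _ _ hn) hn, ih]

section PowHomogeneous

variable {f : ℕ → ℝ} (hf : AntitoneOn f (Ici 1)) (hpow : ∀ n, 1 ≤ n → ∀ k : ℕ, f (n ^ k) = k * f n)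
include hf hpow

lemma nat_mul_abs_mul_log_sub_le {m n : ℕ} (hm : 2 ≤ m) (hn : 1 ≤ n) (k : ℕ) :
    k * |f n * log m - f m * log n| ≤ -(f m * log m) := by
  set j := Nat.log m (n ^ k)
  have hnk : 1 ≤ n ^ k := Nat.one_le_pow _ _ hn
  have hlow : m ^ j ≤ n ^ k := Nat.pow_log_le_self m (by omega)
  have hupp : n ^ k ≤ m ^ (j + 1) := (Nat.lt_pow_succ_log_self (by omega) _).le
  have hf_low : k * f n ≤ j * f m := by
    rw [← hpow n hn, ← hpow m (by omega)]
    exact hf (mem_Ici.2 (Nat.one_le_pow _ _ (by omega))) (mem_Ici.2 hnk) hlow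
  have hf_upp : (j + 1) * f m ≤ k * f n := by
    rw [← hpow n hn, ← Nat.cast_succ, ← hpow m (by omega)]
    exact hf (mem_Ici.2 hnk) (mem_Ici.2 (Nat.one_le_pow _ _ (by omega))) hupp
  have hlog_low : j * log m ≤ k * log n := by
    rw [← log_pow, ← log_pow]
    exact log_le_log (by positivity) (by exact_mod_cast hlow)
  have hlog_upp : k * log n ≤ (j + 1) * log m := by
    rw [← log_pow, ← Nat.cast_succ, ← log_pow]
    exact log_le_log (by positivity) (by exact_mod_cast hupp)
  have hfm : f m ≤ 0 := by
    have h1 : f 1 = 0 := by simpa using hpow 1 le_rfl 0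
    exact h1 ▸ hf (mem_Ici.2 le_rfl) (mem_Ici.2 (by omega)) (by omega)
  have hlogm : 0 ≤ log m := log_nonneg (by exact_mod_cast (by omega : 1 ≤ m))
  rw [← abs_of_nonneg (Nat.cast_nonneg (α := ℝ) k), ← abs_mul, abs_le]
  constructor <;>
    nlinarith [mul_le_mul_of_nonneg_right hf_low hlogm, mul_le_mul_of_nonneg_right hf_upp hlogm,
      mul_le_mul_of_nonpos_left hlog_low hfm, mul_le_mul_of_nonpos_left hlog_upp hfm]

lemma eq_div_log_mul_log {m n : ℕ} (hm : 2 ≤ m) (hn : 1 ≤ n) :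
    f n = f m / log m * log n := by
  have hlogm : 0 < log m := log_pos (by exact_mod_cast hm)
  have := eq_zero_of_forall_nat_mul_abs_le (nat_mul_abs_mul_log_sub_le hf hpow hm hn)
  field_simp
  linarith

end PowHomogeneous

/-- a completely multiplicative, weakly decreasing sequence
`(a_n)_{n≥1}` with values in `(0,1]` must be of the form `a_n = n^β` for
some `β ≤ 0`. -/
theorem multiplicative_decreasing_is_power (a : ℕ → ℝ)
    (hrange : ∀ n, 1 ≤ n → a n ∈ Set.Ioc (0 : ℝ) 1)
    (hmul : ∀ n m, 1 ≤ n → 1 ≤ m → a (n * m) = a n * a m)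
    (hdec : ∀ n m, 1 ≤ n → n ≤ m → a m ≤ a n) :
    ∃ β : ℝ, β ≤ 0 ∧ ∀ n, 1 ≤ n → a n = (n : ℝ) ^ β := by
  have hpos : ∀ n, 1 ≤ n → 0 < a n := fun n hn => (hrange n hn).1
  have ha1 : a 1 = 1 := by
    have h11 := hmul 1 1 le_rfl le_rfl
    rw [one_mul] at h11
    exact (mul_eq_left₀ (hpos 1 le_rfl).ne').1 h11.symm
  have hlog_anti : AntitoneOn (fun n => log (a n)) (Ici 1) := fun n hn m hm hnm =>
    log_le_log (hpos m (le_trans hn hnm)) (hdec n m hn hnm)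
  have hlog_pow : ∀ n, 1 ≤ n → ∀ k : ℕ, log (a (n ^ k)) = k * log (a n) := fun n hn k => by
    rw [map_pow_of_map_mul ha1 hmul hn, log_pow]
  refine ⟨log (a 2) / log 2,
    div_nonpos_of_nonpos_of_nonneg (log_nonpos (hpos 2 one_le_two).le (hrange 2 one_le_two).2)
      (log_nonneg one_le_two), fun n hn => ?_⟩
  have hlog := eq_div_log_mul_log hlog_anti hlog_pow le_rfl hn
  rw [← exp_log (hpos n hn), rpow_def_of_pos (by exact_mod_cast hn), mul_comm]
  exact_mod_cast congrArg exp hlog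
end
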